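/- arXiv:2005.08073 — 3 statements merged into one kernel-verified Lean document; each statement's English description precedes it below -/
import Mathlib

section
/- Let k ≥ 3 be odd and let A ⊆ Z_n be a B_k-set. Let G be the tripartite properly edge-coloured graph with classes X_1, X_2, Y, each a copy of Z_n, where x ∈ X_1 is joined to x ∈ X_2 with colour 0, and x ∈ X_i is joined to x+a ∈ Y with colour (a,i) for each a ∈ A and i ∈ {1,2}. Then G contains no rainbow cycle of length 2k, and the number of triangles of G is n·|A|. -/
open SimpleGraph

/-- A colouring of (potential) edges is proper on `G` if no two distinct edges of `G`
sharing a vertex receive the same colour. -/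
def ProperColoring {V γ : Type*} (G : SimpleGraph V) (c : Sym2 V → γ) : Prop :=
  ∀ e f : Sym2 V, e ∈ G.edgeSet → f ∈ G.edgeSet → e ≠ f → (∃ v, v ∈ e ∧ v ∈ f) → c e ≠ c f

/-- `G` (with colouring `c`) contains a rainbow cycle of length `t`. -/
def HasRainbowCycle {V γ : Type*} (G : SimpleGraph V) (c : Sym2 V → γ) (t : ℕ) : Prop :=
  ∃ (u : V) (w : G.Walk u u), w.IsCycle ∧ w.length = t ∧ (w.edges.map c).Nodup

/-- Vertex type of the tripartite `B_k`-set construction: classes `X₁` (tag 0),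
`X₂` (tag 1) and `Y` (tag 2), each a copy of `ZMod n`. -/
abbrev TriV (n : ℕ) := Fin 3 × ZMod n

/-- The oriented edge relation: `x ∈ X₁` is joined to its copy `x ∈ X₂`, and
`x ∈ Xᵢ` is joined to `x + a ∈ Y` for `a ∈ A`. -/
def triRel {n : ℕ} (A : Finset (ZMod n)) (u v : TriV n) : Prop :=
  (u.1 = 0 ∧ v.1 = 1 ∧ u.2 = v.2) ∨
  ((u.1 = 0 ∨ u.1 = 1) ∧ v.1 = 2 ∧ v.2 - u.2 ∈ A)

/-- The tripartite graph of the `B_k`-set construction. -/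
def triGraph {n : ℕ} (A : Finset (ZMod n)) : SimpleGraph (TriV n) where
  Adj u v := triRel A u v ∨ triRel A v u
  symm := ⟨by intro u v h; (try dsimp only at h ⊢); tauto⟩
  loopless := ⟨by
    intro u h
    try dsimp only at h
    rcases h with h | h <;> rcases h with ⟨h1, h2, -⟩ | ⟨h1, h2, -⟩ <;>
      first
        | (rw [h1] at h2; exact absurd h2 (by decide))
        | (rcases h1 with h1 | h1 <;> rw [h1] at h2 <;> exact absurd h2 (by decide))⟩

/-- The colour of a pair: edges between `Xᵢ` and `Y` get colour `some (a, i)` where `a`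
is the difference, and the matching edges `X₁X₂` get the colour `none` (colour `0`). -/
def triColFun {n : ℕ} (u v : TriV n) : Option (ZMod n × Fin 2) :=
  if u.1 = 2 ∧ v.1 ≠ 2 then some (u.2 - v.2, if v.1 = 0 then 0 else 1)
  else if v.1 = 2 ∧ u.1 ≠ 2 then some (v.2 - u.2, if u.1 = 0 then 0 else 1)
  else none

lemma triColFun_symm {n : ℕ} (u v : TriV n) : triColFun u v = triColFun v u := by
  unfold triColFun
  by_cases h1 : u.1 = 2 <;> by_cases h2 : v.1 = 2 <;> simp [h1, h2]

/-- The edge-colouring of the tripartite construction. -/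
def triCol {n : ℕ} : Sym2 (TriV n) → Option (ZMod n × Fin 2) :=
  Sym2.lift ⟨fun u v => triColFun u v, triColFun_symm⟩

variable {n : ℕ} {A : Finset (ZMod n)}

lemma triCol_mk (u v : TriV n) : triCol s(u, v) = triColFun u v := by simp [triCol]

lemma adj_cases {u v : TriV n} (h : (triGraph A).Adj u v) :
    (u.1 = 0 ∧ v.1 = 1 ∧ u.2 = v.2) ∨ (v.1 = 0 ∧ u.1 = 1 ∧ u.2 = v.2) ∨
    ((u.1 = 0 ∨ u.1 = 1) ∧ v.1 = 2 ∧ v.2 - u.2 ∈ A) ∨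
    ((v.1 = 0 ∨ v.1 = 1) ∧ u.1 = 2 ∧ u.2 - v.2 ∈ A) := by
  rcases h with (h | h) | (h | h)
  · exact Or.inl h
  · exact Or.inr (Or.inr (Or.inl h))
  · exact Or.inr (Or.inl ⟨h.1, h.2.1, h.2.2.symm⟩)
  · exact Or.inr (Or.inr (Or.inr h))

lemma triCol_matching {u v : TriV n} (h1 : u.1 ≠ 2) (h2 : v.1 ≠ 2) : triCol s(u, v) = none := by
  simp [triCol_mk, triColFun, h1, h2]

lemma triCol_up {u v : TriV n} (h1 : u.1 ≠ 2) (h2 : v.1 = 2) :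
    triCol s(u, v) = some (v.2 - u.2, if u.1 = 0 then 0 else 1) := by
  simp [triCol_mk, triColFun, h1, h2]

lemma triCol_down {u v : TriV n} (h1 : u.1 = 2) (h2 : v.1 ≠ 2) :
    triCol s(u, v) = some (u.2 - v.2, if v.1 = 0 then 0 else 1) := by
  simp [triCol_mk, triColFun, h1, h2]

lemma key {u v : TriV n} (w : (triGraph A).Walk u v) :
    ∃ (s t : Multiset (ZMod n × Fin 2)) (M : ℕ),
      (↑(w.edges.map triCol) : Multiset (Option (ZMod n × Fin 2)))
        = (s + t).map some + Multiset.replicate M none ∧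
      (∀ c ∈ s + t, c.1 ∈ A) ∧
      (s.map Prod.fst).sum - (t.map Prod.fst).sum = v.2 - u.2 ∧
      (Multiset.card s : ℤ) - Multiset.card t
        = (if v.1 = 2 then (1:ℤ) else 0) - (if u.1 = 2 then (1:ℤ) else 0) ∧
      Multiset.card s + Multiset.card t + M = w.length ∧
      (Multiset.card ((s + t).filter (fun c => c.2 = 0)) + M) % 2
        = ((if u.1 = 0 then 1 else 0) + (if v.1 = 0 then 1 else 0)) % 2 := by
  induction w with
  | nil =>
      exact ⟨0, 0, 0, by simp, by simp, by simp, by simp, by simp, by split_ifs <;> simp⟩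
  | @cons u p v h w ih =>
      obtain ⟨s, t, M, h1, h2, h3, h4, h5, h6⟩ := ih
      rcases adj_cases h with ⟨hu, hp, he⟩ | ⟨hp, hu, he⟩ | ⟨hu, hp, ha⟩ | ⟨hp, hu, ha⟩
      · -- matching, u tag 0, p tag 1
        refine ⟨s, t, M + 1, ?_, h2, by rw [he]; exact h3, ?_, ?_, ?_⟩
        · rw [Walk.edges_cons, List.map_cons, ← Multiset.cons_coe, h1,
            triCol_matching (by rw [hu]; decide) (by rw [hp]; decide),
            Multiset.replicate_succ]
          rw [Multiset.add_cons]
        · simp only [hu, hp] at h4 ⊢; simpa using h4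
        · simp only [Walk.length_cons]; omega
        · simp only [hu, hp] at h6 ⊢; simp at h6 ⊢; omega
      · -- matching, u tag 1, p tag 0
        refine ⟨s, t, M + 1, ?_, h2, by rw [he]; exact h3, ?_, ?_, ?_⟩
        · rw [Walk.edges_cons, List.map_cons, ← Multiset.cons_coe, h1,
            triCol_matching (by rw [hu]; decide) (by rw [hp]; decide),
            Multiset.replicate_succ]
          rw [Multiset.add_cons]
        · simp only [hu, hp] at h4 ⊢; simpa using h4
        · simp only [Walk.length_cons]; omega
        · simp only [hu, hp] at h6 ⊢; simp at h6 ⊢; omega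
      · -- up step: u in X, p in Y
        have hu2 : u.1 ≠ 2 := by rcases hu with h' | h' <;> rw [h'] <;> decide
        refine ⟨(p.2 - u.2, if u.1 = 0 then 0 else 1) ::ₘ s, t, M, ?_, ?_, ?_, ?_, ?_, ?_⟩
        · rw [Walk.edges_cons, List.map_cons, ← Multiset.cons_coe, h1,
            triCol_up hu2 hp, Multiset.cons_add, Multiset.map_cons, Multiset.cons_add]
        · intro c hc
          rw [Multiset.cons_add, Multiset.mem_cons] at hc
          rcases hc with rfl | hc
          · exact ha
          · exact h2 c hc
        · rw [Multiset.map_cons, Multiset.sum_cons]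
          linear_combination h3
        · rw [Multiset.card_cons]
          rcases hu with h' | h' <;> simp only [h', hp] at h4 ⊢ <;> simp at h4 ⊢ <;> omega
        · rw [Multiset.card_cons]; simp only [Walk.length_cons]; omega
        · rw [Multiset.cons_add, Multiset.filter_cons]
          rcases hu with h' | h' <;> simp only [h', hp] at h6 ⊢ <;>
            simp at h6 ⊢ <;> omega
      · -- down step: u in Y, p in X
        have hp2 : p.1 ≠ 2 := by rcases hp with h' | h' <;> rw [h'] <;> decide
        refine ⟨s, (u.2 - p.2, if p.1 = 0 then 0 else 1) ::ₘ t, M, ?_, ?_, ?_, ?_, ?_, ?_⟩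
        · rw [Walk.edges_cons, List.map_cons, ← Multiset.cons_coe, h1,
            triCol_down hu hp2, Multiset.add_cons, Multiset.map_cons, Multiset.cons_add]
        · intro c hc
          rw [Multiset.add_cons, Multiset.mem_cons] at hc
          rcases hc with rfl | hc
          · exact ha
          · exact h2 c hc
        · rw [Multiset.map_cons, Multiset.sum_cons]
          linear_combination h3
        · rw [Multiset.card_cons]
          rcases hp with h' | h' <;> simp only [h', hu] at h4 ⊢ <;> simp at h4 ⊢ <;> omega
        · rw [Multiset.card_cons]; simp only [Walk.length_cons]; omega
        · rw [Multiset.add_cons, Multiset.filter_cons]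
          rcases hp with h' | h' <;> simp only [h', hu] at h6 ⊢ <;>
            simp at h6 ⊢ <;> omega

lemma no_rainbow (k : ℕ) (hko : Odd k)
    (hBk : ∀ s t : Multiset (ZMod n), (∀ x ∈ s, x ∈ A) → (∀ x ∈ t, x ∈ A) →
      Multiset.card s = k → Multiset.card t = k → s.sum = t.sum → s = t) :
    ¬ HasRainbowCycle (triGraph A) (triCol (n := n)) (2 * k) := by
  rintro ⟨u, w, _hcyc, hlen, hnd⟩
  obtain ⟨s, t, M, h1, h2, h3, h4, h5, h6⟩ := key w
  have hnd' : ((w.edges.map triCol : List (Option (ZMod n × Fin 2))) : Multiset (Option (ZMod n × Fin 2))).Nodup :=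
    Multiset.coe_nodup.mpr hnd
  rw [h1] at hnd'
  -- M ≤ 1
  have hM1 : M ≤ 1 := by
    have hc := (Multiset.nodup_iff_count_le_one.mp hnd') none
    rw [Multiset.count_add, Multiset.count_replicate] at hc
    have h3' : Multiset.count none ((s + t).map some) = 0 := by
      simp [Multiset.count_eq_zero]
    simp at hc
    omega
  have hst : Multiset.card s = Multiset.card t := by
    have : (Multiset.card s : ℤ) - Multiset.card t = 0 := by rw [h4]; ring
    omega
  rw [hlen] at h5
  have hM0 : M = 0 := by omega
  have hsk : Multiset.card s = k := by omega
  have htk : Multiset.card t = k := by omega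
  subst hM0
  rw [Multiset.replicate_zero, add_zero] at hnd'
  have hD : (s + t).Nodup := hnd'.of_map some
  -- B_k application
  have hsum : (s.map Prod.fst).sum = (t.map Prod.fst).sum := by
    have : (s.map Prod.fst).sum - (t.map Prod.fst).sum = 0 := by rw [h3]; ring
    linear_combination this
  have heq : s.map Prod.fst = t.map Prod.fst := by
    refine hBk _ _ ?_ ?_ (by simp [hsk]) (by simp [htk]) hsum
    · intro x hx
      obtain ⟨c, hc, rfl⟩ := Multiset.mem_map.mp hx
      exact h2 c (Multiset.mem_add.mpr (Or.inl hc))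
    · intro x hx
      obtain ⟨c, hc, rfl⟩ := Multiset.mem_map.mp hx
      exact h2 c (Multiset.mem_add.mpr (Or.inr hc))
  -- tag-0 filter has card k
  set D := s + t with hDdef
  set D0 := D.filter (fun c => c.2 = 0) with hD0
  set D1 := D.filter (fun c => ¬ c.2 = 0) with hD1
  have hsplit : D0 + D1 = D := Multiset.filter_add_not _ D
  have hD0nd : (D0.map Prod.fst).Nodup := by
    refine (hD.filter _).map_on ?_
    intro x hx y hy hxy
    have hx2 := (Multiset.mem_filter.mp hx).2
    have hy2 := (Multiset.mem_filter.mp hy).2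
    exact Prod.ext hxy (by rw [hx2, hy2])
  have hD1nd : (D1.map Prod.fst).Nodup := by
    refine (hD.filter _).map_on ?_
    intro x hx y hy hxy
    have hx2 := (Multiset.mem_filter.mp hx).2
    have hy2 := (Multiset.mem_filter.mp hy).2
    refine Prod.ext hxy ?_
    omega
  have hDmap : D0.map Prod.fst + D1.map Prod.fst = s.map Prod.fst + s.map Prod.fst := by
    rw [← Multiset.map_add, hsplit, hDdef, Multiset.map_add, ← heq]
  have hcard0 : D0.map Prod.fst = s.map Prod.fst := by
    refine Multiset.ext.mpr fun a => ?_
    have c0 := Multiset.nodup_iff_count_le_one.mp hD0nd a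
    have c1 := Multiset.nodup_iff_count_le_one.mp hD1nd a
    have := congrArg (Multiset.count a) hDmap
    rw [Multiset.count_add, Multiset.count_add] at this
    omega
  have hF : Multiset.card D0 = k := by
    have := congrArg Multiset.card hcard0
    rwa [Multiset.card_map, Multiset.card_map, hsk] at this
  rw [hF] at h6
  have hk2 := Nat.odd_iff.mp hko
  split_ifs at h6 <;> omega

lemma edge_norm {a b : TriV n} (h : (triGraph A).Adj a b) :
    (∃ x : ZMod n, s(a,b) = s(((0:Fin 3),x), ((1:Fin 3),x))) ∨
    (∃ (x c : ZMod n) (i : Fin 3), c ∈ A ∧ (i = 0 ∨ i = 1) ∧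
      s(a,b) = s((i,x),((2:Fin 3),x+c))) := by
  rcases adj_cases h with ⟨ha, hb, he⟩ | ⟨hb, ha, he⟩ | ⟨ha, hb, hc⟩ | ⟨hb, ha, hc⟩
  · left
    exact ⟨a.2, by rw [show a = ((0:Fin 3), a.2) from Prod.ext ha rfl,
      show b = ((1:Fin 3), a.2) from Prod.ext hb he.symm]⟩
  · left
    refine ⟨a.2, ?_⟩
    rw [show a = ((1:Fin 3), a.2) from Prod.ext ha rfl,
      show b = ((0:Fin 3), a.2) from Prod.ext hb he.symm, Sym2.eq_swap]
  · right
    refine ⟨a.2, b.2 - a.2, a.1, hc, ha, ?_⟩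
    have hb' : b = ((2:Fin 3), a.2 + (b.2 - a.2)) := Prod.ext hb (by ring)
    rw [← hb']
  · right
    refine ⟨b.2, a.2 - b.2, b.1, hc, hb, ?_⟩
    have ha' : a = ((2:Fin 3), b.2 + (a.2 - b.2)) := Prod.ext ha (by ring)
    rw [← ha']
    exact Sym2.eq_swap

lemma proper : ProperColoring (triGraph A) (triCol (n := n)) := by
  intro e f he hf hne hshare hcol
  obtain ⟨v, hve, hvf⟩ := hshare
  induction' e using Sym2.ind with a b
  induction' f using Sym2.ind with a' b'
  rw [SimpleGraph.mem_edgeSet] at he hf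
  rcases edge_norm he with ⟨x, hx⟩ | ⟨x, c, i, hc, hi, hx⟩ <;>
    rcases edge_norm hf with ⟨y, hy⟩ | ⟨y, c', i', hc', hi', hy⟩ <;>
    (rw [hx] at hne hcol hve; rw [hy] at hne hcol hvf;
     rw [Sym2.mem_iff] at hve hvf)
  · -- both matching
    have hxy : x = y := by
      rcases hve with rfl | rfl <;> rcases hvf with h | h <;>
        simp [Prod.ext_iff] at h <;> tauto
    subst hxy
    exact hne rfl
  · -- matching vs up
    rw [triCol_matching (by simp) (by simp),
      triCol_up (show ((i',y) : TriV n).1 ≠ 2 by rcases hi' with h | h <;> simp [h]) rfl] at hcol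
    simp at hcol
  · -- up vs matching
    rw [triCol_up (show ((i,x) : TriV n).1 ≠ 2 by rcases hi with h | h <;> simp [h]) rfl,
      triCol_matching (by simp) (by simp)] at hcol
    simp at hcol
  · -- up vs up
    have hi2 : ((i,x) : TriV n).1 ≠ 2 := by rcases hi with h | h <;> simp [h]
    have hi2' : ((i',y) : TriV n).1 ≠ 2 := by rcases hi' with h | h <;> simp [h]
    rw [triCol_up hi2 rfl, triCol_up hi2' rfl] at hcol
    simp only [add_sub_cancel_left, Option.some.injEq, Prod.mk.injEq] at hcol
    obtain ⟨hcc, hii⟩ := hcol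
    have hii' : i = i' := by
      rcases hi with h | h <;> rcases hi' with h' | h' <;> rw [h, h'] <;>
        rw [h, h'] at hii <;> simp_all
    subst hcc hii'
    have hxy : x = y := by
      rcases hve with rfl | rfl <;> rcases hvf with h | h <;>
        simp [Prod.ext_iff] at h <;> tauto
    subst hxy
    exact hne rfl

def triF {n : ℕ} (p : ZMod n × ZMod n) : Finset (TriV n) :=
  {((0:Fin 3), p.1), ((1:Fin 3), p.1), ((2:Fin 3), p.1 + p.2)}

set_option maxHeartbeats 2000000 in
lemma triangles (hn : 0 < n) :
    {S : Finset (TriV n) | S.card = 3 ∧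
        ∀ u ∈ S, ∀ v ∈ S, u ≠ v → (triGraph A).Adj u v}.ncard = n * A.card := by
  haveI : NeZero n := ⟨hn.ne'⟩
  classical
  have hset : {S : Finset (TriV n) | S.card = 3 ∧
      ∀ u ∈ S, ∀ v ∈ S, u ≠ v → (triGraph A).Adj u v}
      = ↑((Finset.univ ×ˢ A).image triF) := by
    ext S
    constructor
    · rintro ⟨hcard, hadj⟩
      rw [Finset.mem_coe, Finset.mem_image]
      obtain ⟨p, q, r, hpq, hpr, hqr, rfl⟩ := Finset.card_eq_three.mp hcard
      have h1 := adj_cases (hadj p (by simp) q (by simp) hpq)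
      have h2 := adj_cases (hadj p (by simp) r (by simp) hpr)
      have h3 := adj_cases (hadj q (by simp) r (by simp) hqr)
      rcases h1 with ⟨hp1, hq1, he1⟩ | ⟨hq1, hp1, he1⟩ | ⟨hpx1, hq1, ha1⟩ | ⟨hqx1, hp1, ha1⟩ <;>
        rcases h2 with ⟨hp2, hr2, he2⟩ | ⟨hr2, hp2, he2⟩ | ⟨hpx2, hr2, ha2⟩ | ⟨hrx2, hp2, ha2⟩ <;>
        rcases h3 with ⟨hq3, hr3, he3⟩ | ⟨hr3, hq3, he3⟩ | ⟨hqx3, hr3, ha3⟩ | ⟨hrx3, hq3, ha3⟩ <;>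
        first | (exfalso; simp_all; done) | skip
      · -- p0 q1 r2
        refine ⟨(p.2, r.2 - p.2), Finset.mem_product.mpr ⟨Finset.mem_univ _, ha2⟩, ?_⟩
        have e1 : ((0:Fin 3), p.2) = p := Prod.ext hp1.symm rfl
        have e2 : ((1:Fin 3), p.2) = q := Prod.ext hq1.symm he1
        have e3 : ((2:Fin 3), p.2 + (r.2 - p.2)) = r := Prod.ext hr2.symm (by ring)
        simp only [triF]
        rw [e1, e2, e3]
      · -- p1 q0 r2
        refine ⟨(p.2, r.2 - p.2), Finset.mem_product.mpr ⟨Finset.mem_univ _, ha2⟩, ?_⟩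
        have e1 : ((0:Fin 3), p.2) = q := Prod.ext hq1.symm he1
        have e2 : ((1:Fin 3), p.2) = p := Prod.ext hp1.symm rfl
        have e3 : ((2:Fin 3), p.2 + (r.2 - p.2)) = r := Prod.ext hr2.symm (by ring)
        simp only [triF]
        rw [e1, e2, e3]
        ext z; simp; tauto
      · -- p0 r1 q2
        refine ⟨(p.2, q.2 - p.2), Finset.mem_product.mpr ⟨Finset.mem_univ _, ha1⟩, ?_⟩
        have e1 : ((0:Fin 3), p.2) = p := Prod.ext hp2.symm rfl
        have e2 : ((1:Fin 3), p.2) = r := Prod.ext hr2.symm he2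
        have e3 : ((2:Fin 3), p.2 + (q.2 - p.2)) = q := Prod.ext hq1.symm (by ring)
        simp only [triF]
        rw [e1, e2, e3]
        ext z; simp; tauto
      · -- p1 r0 q2
        refine ⟨(p.2, q.2 - p.2), Finset.mem_product.mpr ⟨Finset.mem_univ _, ha1⟩, ?_⟩
        have e1 : ((0:Fin 3), p.2) = r := Prod.ext hr2.symm he2
        have e2 : ((1:Fin 3), p.2) = p := Prod.ext hp2.symm rfl
        have e3 : ((2:Fin 3), p.2 + (q.2 - p.2)) = q := Prod.ext hq1.symm (by ring)
        simp only [triF]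
        rw [e1, e2, e3]
        ext z; simp; tauto
      · -- q0 r1 p2
        refine ⟨(q.2, p.2 - q.2), Finset.mem_product.mpr ⟨Finset.mem_univ _, ha1⟩, ?_⟩
        have e1 : ((0:Fin 3), q.2) = q := Prod.ext hq3.symm rfl
        have e2 : ((1:Fin 3), q.2) = r := Prod.ext hr3.symm he3
        have e3 : ((2:Fin 3), q.2 + (p.2 - q.2)) = p := Prod.ext hp1.symm (by ring)
        simp only [triF]
        rw [e1, e2, e3]
        ext z; simp; tauto
      · -- q1 r0 p2
        refine ⟨(r.2, p.2 - r.2), Finset.mem_product.mpr ⟨Finset.mem_univ _, ha2⟩, ?_⟩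
        have e1 : ((0:Fin 3), r.2) = r := Prod.ext hr3.symm rfl
        have e2 : ((1:Fin 3), r.2) = q := Prod.ext hq3.symm he3.symm
        have e3 : ((2:Fin 3), r.2 + (p.2 - r.2)) = p := Prod.ext hp1.symm (by ring)
        simp only [triF]
        rw [e1, e2, e3]
        ext z; simp; tauto
    · intro hS
      rw [Finset.mem_coe, Finset.mem_image] at hS
      obtain ⟨⟨x, a⟩, hmem, rfl⟩ := hS
      have ha : a ∈ A := (Finset.mem_product.mp hmem).2
      constructor
      · rw [show triF (x, a) = insert ((0:Fin 3), x) (insert ((1:Fin 3), x)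
            {((2:Fin 3), x + a)}) from rfl,
          Finset.card_insert_of_notMem (by simp [Prod.ext_iff]),
          Finset.card_insert_of_notMem (by simp [Prod.ext_iff]),
          Finset.card_singleton]
      · intro u hu v hv hne
        simp only [triF, Finset.mem_insert, Finset.mem_singleton] at hu hv
        rcases hu with rfl | rfl | rfl <;> rcases hv with rfl | rfl | rfl <;>
          first
            | exact absurd rfl hne
            | exact Or.inl (Or.inl ⟨rfl, rfl, rfl⟩)
            | exact Or.inr (Or.inl ⟨rfl, rfl, rfl⟩)
            | exact Or.inl (Or.inr ⟨Or.inl rfl, rfl, by simpa using ha⟩)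
            | exact Or.inl (Or.inr ⟨Or.inr rfl, rfl, by simpa using ha⟩)
            | exact Or.inr (Or.inr ⟨Or.inl rfl, rfl, by simpa using ha⟩)
            | exact Or.inr (Or.inr ⟨Or.inr rfl, rfl, by simpa using ha⟩)
  rw [hset, Set.ncard_coe_finset, Finset.card_image_of_injOn, Finset.card_product,
    Finset.card_univ, ZMod.card]
  rintro ⟨x, a⟩ - ⟨y, b⟩ - h
  have h0 := h ▸ (show ((0:Fin 3), x) ∈ triF (x, a) by simp [triF])
  have h2 := h ▸ (show ((2:Fin 3), x + a) ∈ triF (x, a) by simp [triF])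
  simp only [triF, Finset.mem_insert, Finset.mem_singleton, Prod.ext_iff] at h0 h2
  simp at h0 h2
  obtain rfl : x = y := h0
  obtain rfl : a = b := by linear_combination h2
  rfl

/-- for `k ≥ 3` odd and `A` a `B_k`-set in `ZMod n`, the tripartite
construction is properly edge-coloured, contains no rainbow cycle of length `2k`, and
has exactly `n·|A|` triangles. -/
theorem tripartite_Bk_construction (k n : ℕ) (hk : 3 ≤ k) (hko : Odd k) (hn : 0 < n)
    (A : Finset (ZMod n))
    (hBk : ∀ s t : Multiset (ZMod n), (∀ x ∈ s, x ∈ A) → (∀ x ∈ t, x ∈ A) →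
      Multiset.card s = k → Multiset.card t = k → s.sum = t.sum → s = t) :
    ProperColoring (triGraph A) (triCol (n := n)) ∧
    ¬ HasRainbowCycle (triGraph A) (triCol (n := n)) (2 * k) ∧
    {S : Finset (TriV n) | S.card = 3 ∧
        ∀ u ∈ S, ∀ v ∈ S, u ≠ v → (triGraph A).Adj u v}.ncard = n * A.card := by
  exact ⟨proper, no_rainbow k hko hBk, triangles hn⟩
end

section
/- Let k = 3 and let G be a properly edge-coloured graph with no rainbow cycle of length 2k. Then for any edge ab of G there is at most one vertex c such that abc is a path and the pair a,c has at least 100·3 common neighbours. -/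
open SimpleGraph

private lemma strip_one {V : Type} [Fintype V] (S T : Set V) (n : ℕ)
    (hS : n + 1 ≤ S.ncard) (hT : (S ∩ T).Subsingleton) : n ≤ (S \ T).ncard := by
  have h1 : (S ∩ T).ncard ≤ 1 := by
    rw [Set.ncard_le_one_iff]
    intro _ _ ha hb
    exact hT ha hb
  have h2 : S \ T = S \ (S ∩ T) := Set.diff_self_inter.symm
  have h3 := Set.ncard_le_ncard_diff_add_ncard S (S ∩ T)
  rw [← h2] at h3
  omega

/-- case `k = 3`: in a properly coloured graph with no rainbow `C₆`,
any edge `ab` has at most one extension to a path `abc` such that `a, c` have at least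
`300 = 100·3` common neighbours. -/
theorem at_most_one_bad_extension (V : Type) [Fintype V] (G : SimpleGraph V)
    (γ : Type) (c : Sym2 V → γ)
    (hp : ProperColoring G c) (hr : ¬ HasRainbowCycle G c 6)
    (a b : V) (hab : G.Adj a b) :
    ∀ x y : V,
      G.Adj b x → x ≠ a → 300 ≤ (G.neighborSet a ∩ G.neighborSet x).ncard →
      G.Adj b y → y ≠ a → 300 ≤ (G.neighborSet a ∩ G.neighborSet y).ncard →
      x = y := by
  intro x y hbx hxa hX hby hya hY
  by_contra hxy
  -- every colour class at a fixed endpoint is a subsingleton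
  have hsub : ∀ (p : V) (t : γ), ({u | G.Adj p u ∧ c s(p, u) = t}).Subsingleton := by
    intro p t u hu u' hu'
    by_contra hne
    refine hp s(p, u) s(p, u') (G.mem_edgeSet.2 hu.1) (G.mem_edgeSet.2 hu'.1) ?_
      ⟨p, by simp, by simp⟩ (hu.2.trans hu'.2.symm)
    simp only [ne_eq, Sym2.eq, Sym2.rel_iff', Prod.mk.injEq, Prod.swap_prod_mk]
    push_neg
    exact ⟨fun _ => hne, fun h _ => (G.ne_of_adj hu'.1) h⟩
  -- abbreviations
  have prop' : ∀ {p q r s' : V}, G.Adj p q → G.Adj r s' → s(p, q) ≠ s(r, s') →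
      (∃ w, w ∈ s(p, q) ∧ w ∈ s(r, s')) → c s(p, q) ≠ c s(r, s') :=
    fun h1 h2 hne hsh => hp _ _ (G.mem_edgeSet.2 h1) (G.mem_edgeSet.2 h2) hne hsh
  have sym2ne : ∀ {p q r s' : V}, (p ≠ r ∨ q ≠ s') → (p ≠ s' ∨ q ≠ r) → s(p, q) ≠ s(r, s') := by
    intro p q r s' h1 h2 h
    rw [Sym2.eq_iff] at h
    rcases h with ⟨h3, h4⟩ | ⟨h3, h4⟩ <;> tauto
  -- choose u
  set S0 := G.neighborSet a ∩ G.neighborSet x with hS0def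
  set S1 := S0 \ {b} with hS1def
  set S2 := S1 \ {y} with hS2def
  set S3 := S2 \ {z | c s(a, z) = c s(x, b)} with hS3def
  set S4 := S3 \ {z | c s(a, z) = c s(b, y)} with hS4def
  set S5 := S4 \ {z | c s(z, x) = c s(b, y)} with hS5def
  have memS0 : ∀ {z}, z ∈ S5 → z ∈ S0 := fun hz =>
    Set.diff_subset (Set.diff_subset (Set.diff_subset (Set.diff_subset (Set.diff_subset hz))))
  have s1 : 299 ≤ S1.ncard :=
    strip_one _ _ _ hX (Set.subsingleton_singleton.anti Set.inter_subset_right)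
  have s2 : 298 ≤ S2.ncard :=
    strip_one _ _ _ s1 (Set.subsingleton_singleton.anti Set.inter_subset_right)
  have s3 : 297 ≤ S3.ncard := by
    refine strip_one _ _ _ s2 ((hsub a (c s(x, b))).anti ?_)
    exact fun z hz => ⟨(Set.diff_subset (Set.diff_subset hz.1)).1, hz.2⟩
  have s4 : 296 ≤ S4.ncard := by
    refine strip_one _ _ _ s3 ((hsub a (c s(b, y))).anti ?_)
    exact fun z hz => ⟨(Set.diff_subset (Set.diff_subset (Set.diff_subset hz.1))).1, hz.2⟩
  have s5 : 295 ≤ S5.ncard := by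
    refine strip_one _ _ _ s4 ((hsub x (c s(b, y))).anti ?_)
    refine fun z hz => ⟨(Set.diff_subset (Set.diff_subset (Set.diff_subset (Set.diff_subset hz.1)))).2, ?_⟩
    rw [Sym2.eq_swap]; exact hz.2
  obtain ⟨u, hu⟩ : S5.Nonempty := Set.nonempty_of_ncard_ne_zero (by omega)
  have hau : G.Adj a u := (memS0 hu).1
  have hxu : G.Adj x u := (memS0 hu).2
  have hub : u ≠ b := hu.1.1.1.1.2
  have huy : u ≠ y := hu.1.1.1.2
  have d13 : c s(a, u) ≠ c s(x, b) := hu.1.1.2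
  have d14 : c s(a, u) ≠ c s(b, y) := hu.1.2
  have d24 : c s(u, x) ≠ c s(b, y) := hu.2
  -- choose v
  set R0 := G.neighborSet a ∩ G.neighborSet y with hR0def
  set R1 := R0 \ {b} with hR1def
  set R2 := R1 \ {x} with hR2def
  set R3 := R2 \ {u} with hR3def
  set R4 := R3 \ {z | c s(z, a) = c s(u, x)} with hR4def
  set R5 := R4 \ {z | c s(z, a) = c s(x, b)} with hR5def
  set R6 := R5 \ {z | c s(z, a) = c s(b, y)} with hR6def
  set R7 := R6 \ {z | c s(y, z) = c s(a, u)} with hR7def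
  set R8 := R7 \ {z | c s(y, z) = c s(u, x)} with hR8def
  set R9 := R8 \ {z | c s(y, z) = c s(x, b)} with hR9def
  have memR0 : ∀ {z}, z ∈ R9 → z ∈ R0 := fun hz =>
    Set.diff_subset (Set.diff_subset (Set.diff_subset (Set.diff_subset (Set.diff_subset
      (Set.diff_subset (Set.diff_subset (Set.diff_subset (Set.diff_subset hz))))))))
  have memaR : ∀ {z}, z ∈ R9 → G.Adj a z := fun hz => (memR0 hz).1
  have r1 : 299 ≤ R1.ncard :=
    strip_one _ _ _ hY (Set.subsingleton_singleton.anti Set.inter_subset_right)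
  have r2 : 298 ≤ R2.ncard :=
    strip_one _ _ _ r1 (Set.subsingleton_singleton.anti Set.inter_subset_right)
  have r3 : 297 ≤ R3.ncard :=
    strip_one _ _ _ r2 (Set.subsingleton_singleton.anti Set.inter_subset_right)
  have subR : ∀ n : ℕ, ∀ (Rp : Set V), Rp ⊆ R0 → ∀ t : ℕ, True := fun _ _ _ _ => trivial
  have r4 : 296 ≤ R4.ncard := by
    refine strip_one _ _ _ r3 ((hsub a (c s(u, x))).anti ?_)
    refine fun z hz => ⟨(Set.diff_subset (Set.diff_subset (Set.diff_subset hz.1))).1, ?_⟩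
    rw [Sym2.eq_swap]; exact hz.2
  have r5 : 295 ≤ R5.ncard := by
    refine strip_one _ _ _ r4 ((hsub a (c s(x, b))).anti ?_)
    refine fun z hz => ⟨(Set.diff_subset (Set.diff_subset (Set.diff_subset (Set.diff_subset hz.1)))).1, ?_⟩
    rw [Sym2.eq_swap]; exact hz.2
  have r6 : 294 ≤ R6.ncard := by
    refine strip_one _ _ _ r5 ((hsub a (c s(b, y))).anti ?_)
    refine fun z hz => ⟨(Set.diff_subset (Set.diff_subset (Set.diff_subset (Set.diff_subset (Set.diff_subset hz.1))))).1, ?_⟩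
    rw [Sym2.eq_swap]; exact hz.2
  have r7 : 293 ≤ R7.ncard := by
    refine strip_one _ _ _ r6 ((hsub y (c s(a, u))).anti ?_)
    exact fun z hz => ⟨(Set.diff_subset (Set.diff_subset (Set.diff_subset (Set.diff_subset (Set.diff_subset (Set.diff_subset hz.1)))))).2, hz.2⟩
  have r8 : 292 ≤ R8.ncard := by
    refine strip_one _ _ _ r7 ((hsub y (c s(u, x))).anti ?_)
    exact fun z hz => ⟨(Set.diff_subset (Set.diff_subset (Set.diff_subset (Set.diff_subset (Set.diff_subset (Set.diff_subset (Set.diff_subset hz.1))))))).2, hz.2⟩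
  have r9 : 291 ≤ R9.ncard := by
    refine strip_one _ _ _ r8 ((hsub y (c s(x, b))).anti ?_)
    exact fun z hz => ⟨(Set.diff_subset (Set.diff_subset (Set.diff_subset (Set.diff_subset (Set.diff_subset (Set.diff_subset (Set.diff_subset (Set.diff_subset hz.1)))))))).2, hz.2⟩
  obtain ⟨v, hv⟩ : R9.Nonempty := Set.nonempty_of_ncard_ne_zero (by omega)
  have hav : G.Adj a v := (memR0 hv).1
  have hyv : G.Adj y v := (memR0 hv).2
  have hvb : v ≠ b := hv.1.1.1.1.1.1.1.1.2
  have hvx : v ≠ x := hv.1.1.1.1.1.1.1.2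
  have hvu : v ≠ u := hv.1.1.1.1.1.1.2
  have d26s : c s(v, a) ≠ c s(u, x) := hv.1.1.1.1.1.2
  have d36s : c s(v, a) ≠ c s(x, b) := hv.1.1.1.1.2
  have d46s : c s(v, a) ≠ c s(b, y) := hv.1.1.1.2
  have d15s : c s(y, v) ≠ c s(a, u) := hv.1.1.2
  have d25s : c s(y, v) ≠ c s(u, x) := hv.1.2
  have d35s : c s(y, v) ≠ c s(x, b) := hv.2
  -- vertex distinctness
  have hax : a ≠ x := hxa.symm
  have hay : a ≠ y := hya.symm
  have hab' : a ≠ b := hab.ne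
  have hxb' : x ≠ b := hbx.ne'
  have hyb : y ≠ b := hby.ne'
  -- the rainbow 6-cycle
  have hux : G.Adj u x := hxu.symm
  have hxb2 : G.Adj x b := hbx.symm
  have hyv2 : G.Adj y v := hyv
  have hva : G.Adj v a := hav.symm
  have d12 : c s(a, u) ≠ c s(u, x) :=
    prop' hau hux (sym2ne (Or.inl hau.ne) (Or.inl hax)) ⟨u, by simp, by simp⟩
  have d16 : c s(a, u) ≠ c s(v, a) :=
    prop' hau hva (sym2ne (Or.inl hav.ne) (Or.inr hvu.symm)) ⟨a, by simp, by simp⟩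
  have d23 : c s(u, x) ≠ c s(x, b) :=
    prop' hux hxb2 (sym2ne (Or.inr hxb') (Or.inl hub)) ⟨x, by simp, by simp⟩
  have d34 : c s(x, b) ≠ c s(b, y) :=
    prop' hxb2 hby (sym2ne (Or.inl hxb') (Or.inl hxy)) ⟨b, by simp, by simp⟩
  have d45 : c s(b, y) ≠ c s(y, v) :=
    prop' hby hyv2 (sym2ne (Or.inl hby.ne) (Or.inl hvb.symm)) ⟨y, by simp, by simp⟩
  have d56 : c s(y, v) ≠ c s(v, a) :=
    prop' hyv2 hva (sym2ne (Or.inl hyv.ne) (Or.inl hya)) ⟨v, by simp, by simp⟩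
  have d15 : c s(a, u) ≠ c s(y, v) := d15s.symm
  have d25 : c s(u, x) ≠ c s(y, v) := d25s.symm
  have d26 : c s(u, x) ≠ c s(v, a) := d26s.symm
  have d35 : c s(x, b) ≠ c s(y, v) := d35s.symm
  have d36 : c s(x, b) ≠ c s(v, a) := d36s.symm
  have d46 : c s(b, y) ≠ c s(v, a) := d46s.symm
  refine hr ⟨a, Walk.cons hau (Walk.cons hux (Walk.cons hxb2 (Walk.cons hby (Walk.cons hyv2
    (Walk.cons hva Walk.nil))))), ?_, ?_, ?_⟩
  · constructor
    · constructor
      · constructor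
        simp only [Walk.edges_cons, Walk.edges_nil]
        refine List.Nodup.of_map c ?_
        simp only [List.map_cons, List.map_nil, List.nodup_cons, List.mem_cons,
          List.not_mem_nil, or_false, List.nodup_nil, and_true, not_or]
        exact ⟨⟨d12, d13, d14, d15, d16⟩, ⟨d23, d24, d25, d26⟩, ⟨d34, d35, d36⟩, ⟨d45, d46⟩, d56, not_false⟩
      · simp
    · simp only [Walk.support_cons, Walk.support_nil, List.tail_cons]
      simp only [List.nodup_cons, List.mem_cons, List.not_mem_nil, or_false,
        List.nodup_nil, and_true, not_or, List.mem_singleton]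
      refine ⟨⟨hxu.ne', hub, huy, hvu.symm, hau.ne'⟩, ⟨hxb', hxy, hvx.symm, hax.symm⟩,
        ⟨hyb.symm, hvb.symm, hab'.symm⟩, ⟨hyv.ne, hay.symm⟩, hav.ne', not_false⟩
  · simp
  · simp only [Walk.edges_cons, Walk.edges_nil, List.map_cons, List.map_nil, List.nodup_cons,
      List.mem_cons, List.not_mem_nil, or_false, List.nodup_nil, and_true, not_or]
    exact ⟨⟨d12, d13, d14, d15, d16⟩, ⟨d23, d24, d25, d26⟩, ⟨d34, d35, d36⟩, ⟨d45, d46⟩, d56, not_false⟩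
end

section
/- Let k ≥ 2 and suppose G is a properly edge-coloured graph on n vertices with no rainbow cycle of length 4 (k = 2 case). Then no pair of vertices of G has 200 or more common neighbours, and consequently the number of 4-cycles in G is at most 200·n^2. -/
open SimpleGraph

lemma aux_key {V γ : Type*} [Fintype V] (G : SimpleGraph V) (c : Sym2 V → γ)
    (hp : ProperColoring G c) (hr : ¬ HasRainbowCycle G c 4) {x y : V} (hxy : x ≠ y) :
    (G.neighborSet x ∩ G.neighborSet y).ncard ≤ 3 := by
  classical
  by_contra h
  push_neg at h
  set S : Set V := G.neighborSet x ∩ G.neighborSet y with hSdef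
  have hSfin : S.Finite := Set.toFinite _
  set F : Finset V := hSfin.toFinset with hFdef
  have hFcard : 4 ≤ F.card := by
    have : S.ncard = F.card := Set.ncard_eq_toFinset_card S hSfin
    omega
  have hmemF : ∀ {w : V}, w ∈ F → G.Adj x w ∧ G.Adj y w := by
    intro w hw
    rw [hFdef, Set.Finite.mem_toFinset] at hw
    exact ⟨hw.1, hw.2⟩
  obtain ⟨u, hu⟩ : F.Nonempty := Finset.card_pos.mp (by omega)
  obtain ⟨hxu, hyu⟩ := hmemF hu
  set Bad : Finset V :=
    {u} ∪ F.filter (fun w => c s(x, w) = c s(u, y)) ∪ F.filter (fun w => c s(w, y) = c s(x, u))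
    with hBdef
  have hb2 : (F.filter (fun w => c s(x, w) = c s(u, y))).card ≤ 1 := by
    apply Finset.card_le_one.mpr
    intro a ha b hb
    simp only [Finset.mem_filter] at ha hb
    by_contra hab
    exact hp s(x, a) s(x, b) (by simpa using (hmemF ha.1).1) (by simpa using (hmemF hb.1).1)
      (fun h' => hab (Sym2.congr_right.mp h'))
      ⟨x, by simp, by simp⟩ (ha.2.trans hb.2.symm)
  have hb3 : (F.filter (fun w => c s(w, y) = c s(x, u))).card ≤ 1 := by
    apply Finset.card_le_one.mpr
    intro a ha b hb
    simp only [Finset.mem_filter] at ha hb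
    by_contra hab
    exact hp s(a, y) s(b, y) (by simpa using (hmemF ha.1).2.symm)
      (by simpa using (hmemF hb.1).2.symm)
      (fun h' => hab (Sym2.congr_left.mp h'))
      ⟨y, by simp, by simp⟩ (ha.2.trans hb.2.symm)
  have hBad : Bad.card ≤ 3 := by
    calc Bad.card ≤ ({u} : Finset V).card + (F.filter (fun w => c s(x, w) = c s(u, y))).card
        + (F.filter (fun w => c s(w, y) = c s(x, u))).card := by
          refine (Finset.card_union_le _ _).trans ?_
          exact Nat.add_le_add_right (Finset.card_union_le _ _) _
      _ ≤ 1 + 1 + 1 := by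
          have := hb2; have := hb3; simp at *; omega
      _ = 3 := rfl
  have : ∃ v ∈ F, v ∉ Bad := by
    by_contra hcon
    push_neg at hcon
    exact absurd (Finset.card_le_card hcon) (by omega)
  obtain ⟨v, hvF, hvB⟩ := this
  simp only [hBdef, Finset.mem_union, Finset.mem_singleton, Finset.mem_filter, not_or] at hvB
  obtain ⟨⟨hvu, hc2⟩, hc3⟩ := hvB
  have hc2' : c s(x, v) ≠ c s(u, y) := fun h' => hc2 ⟨hvF, h'⟩
  have hc3' : c s(v, y) ≠ c s(x, u) := fun h' => hc3 ⟨hvF, h'⟩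
  obtain ⟨hxv, hyv⟩ := hmemF hvF
  have n1 : x ≠ u := hxu.ne
  have n2 : x ≠ v := hxv.ne
  have n3 : y ≠ u := hyu.ne
  have n4 : y ≠ v := hyv.ne
  have n5 : v ≠ u := hvu
  -- build the rainbow 4-cycle x - u - y - v - x
  apply hr
  refine ⟨x, .cons hxu (.cons hyu.symm (.cons hyv (.cons hxv.symm .nil))), ?_, by simp, ?_⟩
  · simp [Walk.isCycle_def, Walk.isTrail_def, List.nodup_cons, Sym2.eq, Sym2.rel_iff',
      Prod.mk.injEq, Prod.swap_prod_mk]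
    tauto
  · have key : ∀ a b b' : V, G.Adj a b → G.Adj a b' → b ≠ b' → c s(a, b) ≠ c s(a, b') := by
      intro a b b' hab hab' hbb'
      exact hp _ _ (by simpa using hab) (by simpa using hab')
        (fun h' => hbb' (Sym2.congr_right.mp h')) ⟨a, by simp, by simp⟩
    simp only [Walk.edges_cons, Walk.edges_nil, List.map_cons, List.map_nil, List.nodup_cons,
      List.mem_cons, List.not_mem_nil, or_false, List.nodup_nil, and_true]
    refine ⟨?_, ?_, ?_, not_false⟩
    · rintro (h | h | h)
      · rw [show s(x, u) = s(u, x) from Sym2.eq_swap] at h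
        exact key u x y hxu.symm hyu.symm hxy h
      · rw [show s(y, v) = s(v, y) from Sym2.eq_swap] at h
        exact hc3' h.symm
      · rw [show s(v, x) = s(x, v) from Sym2.eq_swap] at h
        exact key x u v hxu hxv (Ne.symm n5) h
    · rintro (h | h)
      · rw [show s(u, y) = s(y, u) from Sym2.eq_swap] at h
        exact key y u v hyu hyv (Ne.symm n5) h
      · rw [show s(v, x) = s(x, v) from Sym2.eq_swap] at h
        exact hc2' h.symm
    · intro h
      rw [show s(y, v) = s(v, y) from Sym2.eq_swap, show s(v, x) = s(v, x) from rfl] at h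
      exact key v y x hyv.symm hxv.symm (Ne.symm hxy) (by rwa [show s(v, x) = s(v, x) from rfl])

/-- case `k = 2`: a properly edge-coloured graph on `n` vertices with no
rainbow `C₄` has no pair of vertices with `200` or more common neighbours, and
consequently at most `200·n²` cycles of length 4 (counted as injective cyclic
vertex sequences). -/
theorem no_rainbow_C4_common_nbrs_and_C4_count (V : Type) [Fintype V]
    (G : SimpleGraph V) (γ : Type) (c : Sym2 V → γ)
    (hp : ProperColoring G c) (hr : ¬ HasRainbowCycle G c 4) :
    (∀ x y : V, x ≠ y → (G.neighborSet x ∩ G.neighborSet y).ncard < 200) ∧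
    {x : Fin 4 → V | Function.Injective x ∧ ∀ i, G.Adj (x i) (x (i + 1))}.ncard
      ≤ 200 * Fintype.card V ^ 2 := by
  classical
  have hkey := fun {x y : V} (h : x ≠ y) => aux_key G c hp hr h
  refine ⟨fun x y hxy => lt_of_le_of_lt (hkey hxy) (by norm_num), ?_⟩
  set S : Set (Fin 4 → V) :=
    {x : Fin 4 → V | Function.Injective x ∧ ∀ i, G.Adj (x i) (x (i + 1))} with hSdef
  set C : V → V → Finset V :=
    fun a b => Finset.univ.filter (fun w => G.Adj a w ∧ G.Adj b w) with hCdef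
  have hC : ∀ a b : V, a ≠ b → (C a b).card ≤ 3 := by
    intro a b hab
    have hset : G.neighborSet a ∩ G.neighborSet b = ↑(C a b) := by
      ext w; simp [hCdef, mem_neighborSet]
    have := hkey hab
    rwa [hset, Set.ncard_coe_finset] at this
  set f : (Fin 4 → V) → (V × V) × (V × V) := fun x => ((x 0, x 2), (x 1, x 3)) with hfdef
  have hf : Function.Injective f := by
    intro a b h
    simp only [hfdef, Prod.mk.injEq] at h
    funext i
    have : i = 0 ∨ i = 1 ∨ i = 2 ∨ i = 3 := by omega
    rcases this with rfl | rfl | rfl | rfl <;> tauto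
  set T : Finset ((V × V) × (V × V)) :=
    (Finset.univ.filter (fun ab : V × V => ab.1 ≠ ab.2)).biUnion
      (fun ab => ((C ab.1 ab.2) ×ˢ (C ab.1 ab.2)).image (fun uv => (ab, uv))) with hTdef
  have hsub : f '' S ⊆ ↑T := by
    rintro p ⟨x, ⟨hinj, hadj⟩, rfl⟩
    have h02 : x 0 ≠ x 2 := fun h => by
      have := hinj h; simp at this
    have a01 : G.Adj (x 0) (x 1) := hadj 0
    have a12 : G.Adj (x 1) (x 2) := hadj 1
    have a23 : G.Adj (x 2) (x 3) := hadj 2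
    have a30 : G.Adj (x 3) (x 0) := hadj 3
    simp only [hTdef, Finset.coe_biUnion, Set.mem_iUnion, Finset.mem_coe, Finset.mem_filter,
      Finset.mem_image, Finset.mem_product, Finset.mem_univ, true_and]
    exact ⟨(x 0, x 2), h02, (x 1, x 3),
      ⟨by simp [hCdef, a01, a12.symm], by simp [hCdef, a23, a30.symm]⟩, rfl⟩
  have hTcard : T.card ≤ 9 * Fintype.card V ^ 2 := by
    calc T.card ≤ ∑ ab ∈ Finset.univ.filter (fun ab : V × V => ab.1 ≠ ab.2),
          (((C ab.1 ab.2) ×ˢ (C ab.1 ab.2)).image (fun uv => (ab, uv))).card :=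
        Finset.card_biUnion_le
      _ ≤ ∑ ab ∈ Finset.univ.filter (fun ab : V × V => ab.1 ≠ ab.2), 9 := by
          apply Finset.sum_le_sum
          intro ab hab
          simp only [Finset.mem_filter] at hab
          calc (((C ab.1 ab.2) ×ˢ (C ab.1 ab.2)).image (fun uv => (ab, uv))).card
              ≤ ((C ab.1 ab.2) ×ˢ (C ab.1 ab.2)).card := Finset.card_image_le
            _ = (C ab.1 ab.2).card * (C ab.1 ab.2).card := Finset.card_product _ _
            _ ≤ 3 * 3 := Nat.mul_le_mul (hC _ _ hab.2) (hC _ _ hab.2)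
            _ = 9 := rfl
      _ ≤ (Finset.univ : Finset (V × V)).card * 9 := by
          rw [Finset.sum_const, smul_eq_mul]
          exact Nat.mul_le_mul_right _ (Finset.card_filter_le _ _)
      _ = 9 * Fintype.card V ^ 2 := by
          simp [Finset.card_univ, Fintype.card_prod, sq, Nat.mul_comm]
  calc S.ncard = (f '' S).ncard := (Set.ncard_image_of_injective S hf).symm
    _ ≤ (↑T : Set ((V × V) × (V × V))).ncard :=
        Set.ncard_le_ncard hsub T.finite_toSet
    _ = T.card := Set.ncard_coe_finset T
    _ ≤ 9 * Fintype.card V ^ 2 := hTcard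
    _ ≤ 200 * Fintype.card V ^ 2 := Nat.mul_le_mul_right _ (by norm_num)
end
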